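/- arXiv:2003.12820 — 3 statements merged into one kernel-verified Lean document; each statement's English description precedes it below -/
import Mathlib

section
/- Let a₁, a₂, a₃ ≥ 2 be integers and R = ℤ[L₁,L₂,L₃]/(L₁^{a₁}-1, L₂^{a₂}-1, L₃^{a₃}-1). The ideal I = (L₁-1)(L₂-1)(L₃-1)·R is a free ℤ-module of rank (a₁-1)(a₂-1)(a₃-1), with ℤ-basis {L₁^{m₁}L₂^{m₂}L₃^{m₃}(L₁-1)(L₂-1)(L₃-1) : 0 ≤ m_i ≤ a_i - 2}. -/
/-!
The ideal `I` is spanned over `ℤ` by the elements `L^b · g`, `g = (L₁-1)(L₂-1)(L₃-1)`, and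
`g` factors as a product of one-variable factors `L_i^{b_i}(L_i-1)`.  In one variable with
`x^a = 1`, the geometric sum gives `x^{a-1}(x-1) = -∑_{t<a-1} x^t(x-1)`, so the exponents can be
cut down to `b_i ≤ a_i - 2`.

For independence, map `R` to the group ring `ℤ[ℤ/a₁ × ℤ/a₂ × ℤ/a₃]` and sum coefficients over
the corner `{g : g > j}`.  This functional sends `L^b` to `[b > j]` when `b_i < a_i`, so it
sends `L^m · g = ∏ (L_i^{m_i+1} - L_i^{m_i})`, a triple finite difference, to `δ_{mj}`.
-/

open MvPolynomial

/-- The representation ring `ℤ[L₁,L₂,L₃]/(L₁^{a₁}-1, L₂^{a₂}-1, L₃^{a₃}-1)`. -/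
def repRing (a₁ a₂ a₃ : ℕ) : Type :=
  MvPolynomial (Fin 3) ℤ ⧸
    Ideal.span {(X 0 : MvPolynomial (Fin 3) ℤ) ^ a₁ - 1, X 1 ^ a₂ - 1, X 2 ^ a₃ - 1}

noncomputable instance (a₁ a₂ a₃ : ℕ) : CommRing (repRing a₁ a₂ a₃) :=
  Ideal.Quotient.commRing _

/-- The class of `L_i` in the representation ring. -/
noncomputable def Lcl (a₁ a₂ a₃ : ℕ) (i : Fin 3) : repRing a₁ a₂ a₃ :=
  Ideal.Quotient.mk _ (X i)

theorem pow_mul_sub_one_mem_span {R A : Type*} [CommRing R] [Ring A] [Algebra R A] {x : A}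
    {a : ℕ} (ha : 0 < a) (hx : x ^ a = 1) (n : ℕ) :
    x ^ n * (x - 1) ∈
      Submodule.span R (Set.range fun t : Fin (a - 1) => x ^ (t : ℕ) * (x - 1)) := by
  have mem (t : ℕ) (ht : t < a - 1) : x ^ t * (x - 1) ∈
      Submodule.span R (Set.range fun t : Fin (a - 1) => x ^ (t : ℕ) * (x - 1)) :=
    Submodule.subset_span ⟨⟨t, ht⟩, rfl⟩
  rw [pow_eq_pow_mod n hx]
  obtain hlt | heq : n % a < a - 1 ∨ n % a = a - 1 := by have := Nat.mod_lt n ha; omega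
  · exact mem _ hlt
  · have hgeom : ∑ t ∈ Finset.range a, x ^ t * (x - 1) = 0 := by
      rw [← Finset.sum_mul, geom_sum_mul, hx, sub_self]
    rw [← Nat.sub_add_cancel ha, Finset.sum_range_succ] at hgeom
    rw [heq, eq_neg_of_add_eq_zero_right hgeom]
    exact neg_mem (Submodule.sum_mem _ fun t ht => mem t (Finset.mem_range.mp ht))

theorem ite_lt_succ_sub_ite_lt (j m : ℕ) :
    ((if j < m + 1 then 1 else 0) - if j < m then 1 else 0 : ℤ) = if m = j then 1 else 0 := by
  split_ifs <;> omega

namespace repRing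

variable (a₁ a₂ a₃ : ℕ)

noncomputable def mk : MvPolynomial (Fin 3) ℤ →+* repRing a₁ a₂ a₃ :=
  Ideal.Quotient.mk _

theorem mk_surjective : Function.Surjective (mk a₁ a₂ a₃) :=
  Ideal.Quotient.mk_surjective

theorem mk_X (i : Fin 3) : mk a₁ a₂ a₃ (X i) = Lcl a₁ a₂ a₃ i := rfl

theorem Lcl_pow_eq_one (i : Fin 3) : Lcl a₁ a₂ a₃ i ^ ![a₁, a₂, a₃] i = 1 := by
  have : mk a₁ a₂ a₃ (X i ^ ![a₁, a₂, a₃] i - 1) = 0 :=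
    Ideal.Quotient.eq_zero_iff_mem.mpr (Ideal.subset_span (by fin_cases i <;> simp))
  rwa [map_sub, map_pow, map_one, mk_X, sub_eq_zero] at this

noncomputable def Lpow (b : ℕ × ℕ × ℕ) : repRing a₁ a₂ a₃ :=
  Lcl a₁ a₂ a₃ 0 ^ b.1 * Lcl a₁ a₂ a₃ 1 ^ b.2.1 * Lcl a₁ a₂ a₃ 2 ^ b.2.2

noncomputable def gen : repRing a₁ a₂ a₃ :=
  (Lcl a₁ a₂ a₃ 0 - 1) * (Lcl a₁ a₂ a₃ 1 - 1) * (Lcl a₁ a₂ a₃ 2 - 1)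

noncomputable def basisVec (m : Fin (a₁ - 1) × Fin (a₂ - 1) × Fin (a₃ - 1)) : repRing a₁ a₂ a₃ :=
  Lpow a₁ a₂ a₃ (m.1, m.2.1, m.2.2) * gen a₁ a₂ a₃

theorem mk_monomial (u : Fin 3 →₀ ℕ) (c : ℤ) :
    mk a₁ a₂ a₃ (monomial u c) = c • Lpow a₁ a₂ a₃ (u 0, u 1, u 2) := by
  rw [monomial_eq, Finsupp.prod_fintype _ _ (by simp), Fin.prod_univ_three, map_mul,
    ← RingHom.comp_apply, eq_intCast, zsmul_eq_mul]
  simp only [map_mul, map_pow, mk_X, Lpow]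

variable {a₁ a₂ a₃}

theorem Lpow_mul_gen_mem_span (h₁ : 0 < a₁) (h₂ : 0 < a₂) (h₃ : 0 < a₃) (b : ℕ × ℕ × ℕ) :
    Lpow a₁ a₂ a₃ b * gen a₁ a₂ a₃ ∈ Submodule.span ℤ (Set.range (basisVec a₁ a₂ a₃)) := by
  have factor (i : Fin 3) (hi : 0 < ![a₁, a₂, a₃] i) (n : ℕ) :=
    pow_mul_sub_one_mem_span (R := ℤ) hi (Lcl_pow_eq_one a₁ a₂ a₃ i) n
  have hmem := Submodule.mul_mem_mul
    (Submodule.mul_mem_mul (factor 0 h₁ b.1) (factor 1 h₂ b.2.1)) (factor 2 h₃ b.2.2)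
  rw [Submodule.span_mul_span, Submodule.span_mul_span] at hmem
  convert Submodule.span_mono ?_ hmem using 1
  · simp only [Lpow, gen]; ring
  · rintro _ ⟨_, ⟨_, ⟨t₁, rfl⟩, _, ⟨t₂, rfl⟩, rfl⟩, _, ⟨t₃, rfl⟩, rfl⟩
    exact ⟨(t₁, t₂, t₃), by simp only [basisVec, Lpow, gen]; ring⟩

theorem span_basisVec (h₁ : 0 < a₁) (h₂ : 0 < a₂) (h₃ : 0 < a₃) :
    Submodule.span ℤ (Set.range (basisVec a₁ a₂ a₃)) =
      (Ideal.span {gen a₁ a₂ a₃}).restrictScalars ℤ := by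
  apply le_antisymm
  · rw [Submodule.span_le]
    rintro _ ⟨m, rfl⟩
    exact Ideal.mul_mem_left _ _ (Ideal.mem_span_singleton_self _)
  · intro x hx
    obtain ⟨r, rfl⟩ := Ideal.mem_span_singleton'.mp hx
    obtain ⟨p, rfl⟩ := mk_surjective a₁ a₂ a₃ r
    clear hx
    induction p using MvPolynomial.induction_on' with
    | monomial u c =>
      rw [mk_monomial, smul_mul_assoc]
      exact Submodule.smul_mem _ _ (Lpow_mul_gen_mem_span h₁ h₂ h₃ _)
    | add p q hp hq => rw [map_add, add_mul]; exact add_mem hp hq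

section GroupRing

variable (a₁ a₂ a₃)

noncomputable def toGroupRing :
    repRing a₁ a₂ a₃ →+* AddMonoidAlgebra ℤ (ZMod a₁ × ZMod a₂ × ZMod a₃) :=
  Ideal.Quotient.lift _
    (eval₂Hom (Int.castRingHom _) fun i => AddMonoidAlgebra.single
      (![((1 : ZMod a₁), 0, 0), (0, (1 : ZMod a₂), 0), (0, 0, (1 : ZMod a₃))] i) 1)
    (by
      intro p hp
      refine (Ideal.span_le (I := RingHom.ker _)).2 ?_ hp
      rintro q (rfl | rfl | rfl) <;>
      · rw [SetLike.mem_coe, RingHom.mem_ker, map_sub, map_pow, map_one, eval₂Hom_X',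
          AddMonoidAlgebra.single_pow, one_pow, sub_eq_zero, AddMonoidAlgebra.one_def]
        simp [Prod.zero_eq_mk])

theorem toGroupRing_Lcl (i : Fin 3) :
    toGroupRing a₁ a₂ a₃ (Lcl a₁ a₂ a₃ i) = AddMonoidAlgebra.single
      (![((1 : ZMod a₁), 0, 0), (0, (1 : ZMod a₂), 0), (0, 0, (1 : ZMod a₃))] i) 1 :=
  (Ideal.Quotient.lift_mk _ _ _).trans (eval₂Hom_X' _ _ _)

theorem toGroupRing_monomial (b₁ b₂ b₃ : ℕ) :
    toGroupRing a₁ a₂ a₃ (Lcl a₁ a₂ a₃ 0 ^ b₁ * Lcl a₁ a₂ a₃ 1 ^ b₂ * Lcl a₁ a₂ a₃ 2 ^ b₃) =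
      AddMonoidAlgebra.single ((b₁ : ZMod a₁), (b₂ : ZMod a₂), (b₃ : ZMod a₃)) 1 := by
  simp [toGroupRing_Lcl, AddMonoidAlgebra.single_pow]

noncomputable def cornerSum (j : ℕ × ℕ × ℕ) :
    AddMonoidAlgebra ℤ (ZMod a₁ × ZMod a₂ × ZMod a₃) →ₗ[ℤ] ℤ :=
  Finsupp.linearCombination ℤ (fun g : ZMod a₁ × ZMod a₂ × ZMod a₃ =>
      (if j.1 < g.1.val then 1 else 0) * (if j.2.1 < g.2.1.val then 1 else 0) *
        (if j.2.2 < g.2.2.val then 1 else 0)) ∘ₗ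
    (AddMonoidAlgebra.coeffLinearEquiv ℤ).toLinearMap

theorem cornerSum_toGroupRing_monomial (j : ℕ × ℕ × ℕ) (b₁ b₂ b₃ : ℕ) :
    cornerSum a₁ a₂ a₃ j
        (toGroupRing a₁ a₂ a₃ (Lcl a₁ a₂ a₃ 0 ^ b₁ * Lcl a₁ a₂ a₃ 1 ^ b₂ * Lcl a₁ a₂ a₃ 2 ^ b₃)) =
      (if j.1 < b₁ % a₁ then 1 else 0) * (if j.2.1 < b₂ % a₂ then 1 else 0) *
        (if j.2.2 < b₃ % a₃ then 1 else 0) := by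
  simp [cornerSum, toGroupRing_monomial, AddMonoidAlgebra.coeff_single, ZMod.val_natCast]

theorem cornerSum_toGroupRing_basisVec (m : Fin (a₁ - 1) × Fin (a₂ - 1) × Fin (a₃ - 1))
    (j : ℕ × ℕ × ℕ) :
    cornerSum a₁ a₂ a₃ j (toGroupRing a₁ a₂ a₃ (basisVec a₁ a₂ a₃ m)) =
      if (m.1 : ℕ) = j.1 ∧ (m.2.1 : ℕ) = j.2.1 ∧ (m.2.2 : ℕ) = j.2.2 then 1 else 0 := by
  have hm₁ := m.1.isLt
  have hm₂ := m.2.1.isLt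
  have hm₃ := m.2.2.isLt
  have hdiff : basisVec a₁ a₂ a₃ m =
      (Lcl a₁ a₂ a₃ 0 ^ ((m.1 : ℕ) + 1) - Lcl a₁ a₂ a₃ 0 ^ (m.1 : ℕ)) *
        (Lcl a₁ a₂ a₃ 1 ^ ((m.2.1 : ℕ) + 1) - Lcl a₁ a₂ a₃ 1 ^ (m.2.1 : ℕ)) *
        (Lcl a₁ a₂ a₃ 2 ^ ((m.2.2 : ℕ) + 1) - Lcl a₁ a₂ a₃ 2 ^ (m.2.2 : ℕ)) := by
    simp only [basisVec, Lpow, gen]; ring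
  have hdelta : (if (m.1 : ℕ) = j.1 ∧ (m.2.1 : ℕ) = j.2.1 ∧ (m.2.2 : ℕ) = j.2.2 then 1 else 0 : ℤ) =
      (if (m.1 : ℕ) = j.1 then 1 else 0) * (if (m.2.1 : ℕ) = j.2.1 then 1 else 0) *
        (if (m.2.2 : ℕ) = j.2.2 then 1 else 0) := by
    simp only [ite_zero_mul_ite_zero, mul_one, and_assoc]
  rw [hdiff, hdelta, ← ite_lt_succ_sub_ite_lt, ← ite_lt_succ_sub_ite_lt, ← ite_lt_succ_sub_ite_lt]
  simp only [sub_mul, mul_sub, map_sub, cornerSum_toGroupRing_monomial,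
    Nat.mod_eq_of_lt (by omega : (m.1 : ℕ) < a₁),
    Nat.mod_eq_of_lt (by omega : (m.1 : ℕ) + 1 < a₁),
    Nat.mod_eq_of_lt (by omega : (m.2.1 : ℕ) < a₂),
    Nat.mod_eq_of_lt (by omega : (m.2.1 : ℕ) + 1 < a₂),
    Nat.mod_eq_of_lt (by omega : (m.2.2 : ℕ) < a₃),
    Nat.mod_eq_of_lt (by omega : (m.2.2 : ℕ) + 1 < a₃)]

end GroupRing

theorem linearIndependent_basisVec : LinearIndependent ℤ (basisVec a₁ a₂ a₃) := by
  let Λ := LinearMap.pi (R := ℤ) fun j : Fin (a₁ - 1) × Fin (a₂ - 1) × Fin (a₃ - 1) =>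
    cornerSum a₁ a₂ a₃ (j.1, j.2.1, j.2.2) ∘ₗ (toGroupRing a₁ a₂ a₃).toIntAlgHom.toLinearMap
  have hΛ : Λ ∘ basisVec a₁ a₂ a₃ = fun m => Pi.single m 1 := by
    ext m j
    simp [Λ, cornerSum_toGroupRing_basisVec, Pi.single_apply, Prod.ext_iff, Fin.ext_iff, eq_comm]
  refine LinearIndependent.of_comp Λ ?_
  rw [hΛ]
  exact Pi.linearIndependent_single_one _ ℤ

end repRing

open repRing in
theorem fermat_relative_K_basis (a₁ a₂ a₃ : ℕ) (h₁ : 2 ≤ a₁) (h₂ : 2 ≤ a₂) (h₃ : 2 ≤ a₃) :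
    ∃ b : Module.Basis (Fin (a₁ - 1) × Fin (a₂ - 1) × Fin (a₃ - 1)) ℤ
        ((Ideal.span {(Lcl a₁ a₂ a₃ 0 - 1) * (Lcl a₁ a₂ a₃ 1 - 1) * (Lcl a₁ a₂ a₃ 2 - 1)}
          : Ideal (repRing a₁ a₂ a₃)).restrictScalars ℤ),
      ∀ m : Fin (a₁ - 1) × Fin (a₂ - 1) × Fin (a₃ - 1),
        (b m : repRing a₁ a₂ a₃) =
          Lcl a₁ a₂ a₃ 0 ^ (m.1 : ℕ) * Lcl a₁ a₂ a₃ 1 ^ (m.2.1 : ℕ) * Lcl a₁ a₂ a₃ 2 ^ (m.2.2 : ℕ) *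
            ((Lcl a₁ a₂ a₃ 0 - 1) * (Lcl a₁ a₂ a₃ 1 - 1) * (Lcl a₁ a₂ a₃ 2 - 1)) := by
  have hspan := span_basisVec (a₁ := a₁) (a₂ := a₂) (a₃ := a₃) (by omega) (by omega) (by omega)
  exact ⟨(Module.Basis.span linearIndependent_basisVec).map (LinearEquiv.ofEq _ _ hspan),
    fun m => congrArg Subtype.val (Module.Basis.span_apply linearIndependent_basisVec m)⟩
end

section
/- Let a₁, a₂, a₃ ≥ 2 be integers and R = ℤ[L₁,L₂,L₃]/(L₁^{a₁}-1, L₂^{a₂}-1, L₃^{a₃}-1), and I the ideal generated by (L₁-1)(L₂-1)(L₃-1). If g ∈ R and m·g ∈ I for some nonzero integer m, then g ∈ I; that is, R/I is torsion free. -/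
/-!
Put `P = ℤ[X₀, X₁, X₂]`, let `J` be the defining ideal of `R = P/J` and
`δ = (X₀ - 1)(X₁ - 1)(X₂ - 1)`.

Reducing every exponent of a monomial modulo `aᵢ` is a ℤ-linear map `P → P` which is the identity
modulo `J` and has kernel exactly `J`; hence `R` is torsion free as an abelian group.

The substitutions `Xᵢ ↦ 1` preserve `J`, so they induce ring endomorphisms `sᵢ` of `R`, and
`π = (1 - s₀)(1 - s₁)(1 - s₂)` is additive. Each `1 - sᵢ` has image in `(Xᵢ - 1)R` and commutes
with multiplication by `Xⱼ - 1` for `j ≠ i`, so `π` has image in `δR`; and `sᵢ δ = 0`, so `π` fixes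
`δR` pointwise. If `m g ∈ δR`, then `m π(g) = π(m g) = m g`, so `g = π(g) ∈ δR`.
-/

open MvPolynomial

noncomputable section

namespace MvPolynomial

variable {σ R : Type*} [CommRing R]

def powSubOneIdeal (a : σ → ℕ) : Ideal (MvPolynomial σ R) :=
  Ideal.span (Set.range fun i => X i ^ a i - 1)

lemma X_pow_sub_one_mem_powSubOneIdeal (a : σ → ℕ) (i : σ) :
    (X i ^ a i - 1 : MvPolynomial σ R) ∈ powSubOneIdeal a :=
  Ideal.subset_span ⟨i, rfl⟩

def expMod (a : σ → ℕ) (s : σ →₀ ℕ) : σ →₀ ℕ :=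
  Finsupp.onFinset s.support (fun i => s i % a i) fun i hi =>
    Finsupp.mem_support_iff.mpr fun h => hi (by simp [h])

lemma support_expMod_subset (a : σ → ℕ) (s : σ →₀ ℕ) : (expMod a s).support ⊆ s.support :=
  Finsupp.support_onFinset_subset

@[simp]
lemma expMod_apply (a : σ → ℕ) (s : σ →₀ ℕ) (i : σ) : expMod a s i = s i % a i := rfl

lemma expMod_add_single (a : σ → ℕ) (s : σ →₀ ℕ) (i : σ) :
    expMod a (s + Finsupp.single i (a i)) = expMod a s := by
  classical
  ext j
  rcases eq_or_ne i j with rfl | h <;> simp [*]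

variable (R) in
def reduceExp (a : σ → ℕ) : MvPolynomial σ R →ₗ[R] MvPolynomial σ R :=
  (basisMonomials σ R).constr R fun s => monomial (expMod a s) 1

@[simp]
lemma reduceExp_monomial (a : σ → ℕ) (s : σ →₀ ℕ) (c : R) :
    reduceExp R a (monomial s c) = monomial (expMod a s) c := by
  have h1 : reduceExp R a (monomial s 1) = monomial (expMod a s) 1 := by
    simpa [reduceExp] using
      (basisMonomials σ R).constr_basis R (fun s => monomial (expMod a s) 1) s
  rw [← mul_one c, ← smul_eq_mul, ← smul_monomial, map_smul, h1, smul_monomial]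

lemma reduceExp_mul_X_pow_sub_one (a : σ → ℕ) (i : σ) (p : MvPolynomial σ R) :
    reduceExp R a (p * (X i ^ a i - 1)) = 0 := by
  induction p using MvPolynomial.induction_on' with
  | monomial s c =>
    rw [mul_sub, mul_one, X_pow_eq_monomial, monomial_mul, mul_one, map_sub,
      reduceExp_monomial, reduceExp_monomial, expMod_add_single, sub_self]
  | add p q hp hq => rw [add_mul, map_add, hp, hq, add_zero]

lemma reduceExp_eq_zero_of_mem {a : σ → ℕ} {p : MvPolynomial σ R} (hp : p ∈ powSubOneIdeal a) :
    reduceExp R a p = 0 := by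
  obtain ⟨c, rfl⟩ := Finsupp.mem_span_range_iff_exists_finsupp.mp hp
  simp only [Finsupp.sum, map_sum, smul_eq_mul, reduceExp_mul_X_pow_sub_one, Finset.sum_const_zero]

lemma mk_X_pow_mod (a : σ → ℕ) (i : σ) (n : ℕ) :
    Ideal.Quotient.mk (powSubOneIdeal a) (X i ^ (n % a i) : MvPolynomial σ R)
      = Ideal.Quotient.mk (powSubOneIdeal a) (X i ^ n) := by
  have hXi : Ideal.Quotient.mk (powSubOneIdeal a) (X i ^ a i : MvPolynomial σ R) = 1 := by
    rw [← sub_eq_zero, ← map_one (Ideal.Quotient.mk _), ← map_sub,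
      Ideal.Quotient.eq_zero_iff_mem]
    exact X_pow_sub_one_mem_powSubOneIdeal a i
  conv_rhs => rw [← Nat.div_add_mod n (a i), pow_add, pow_mul, map_mul, map_pow, hXi, one_pow,
    one_mul]

lemma mk_reduceExp (a : σ → ℕ) (p : MvPolynomial σ R) :
    Ideal.Quotient.mk (powSubOneIdeal a) (reduceExp R a p) = Ideal.Quotient.mk _ p := by
  induction p using MvPolynomial.induction_on' with
  | monomial s c =>
    rw [reduceExp_monomial, monomial_eq, monomial_eq, map_mul, map_mul,
      Finsupp.prod_of_support_subset _ (support_expMod_subset a s) _ (by simp),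
      Finsupp.prod, map_prod, map_prod]
    simp only [expMod_apply, mk_X_pow_mod]
  | add p q hp hq => rw [map_add, map_add, hp, hq, map_add]

lemma mem_powSubOneIdeal_iff {a : σ → ℕ} {p : MvPolynomial σ R} :
    p ∈ powSubOneIdeal a ↔ reduceExp R a p = 0 := by
  refine ⟨reduceExp_eq_zero_of_mem, fun h => ?_⟩
  rw [← Ideal.Quotient.eq_zero_iff_mem, ← mk_reduceExp, h, map_zero]

instance [IsAddTorsionFree R] : IsAddTorsionFree (MvPolynomial σ R) where
  nsmul_right_injective n hn p q h := by
    ext s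
    have hs := congr_arg (coeff s) h
    simp only [coeff_smul] at hs
    exact IsAddTorsionFree.nsmul_right_injective hn hs

instance [IsAddTorsionFree R] (a : σ → ℕ) :
    IsAddTorsionFree (MvPolynomial σ R ⧸ powSubOneIdeal (R := R) a) where
  nsmul_right_injective n hn := by
    intro x y hxy
    have hn' : n • (x - y) = 0 := by
      simp only at hxy
      rw [nsmul_sub, hxy, sub_self]
    rw [← sub_eq_zero]
    obtain ⟨p, hp⟩ := Ideal.Quotient.mk_surjective (x - y)
    rw [← hp, ← map_nsmul, Ideal.Quotient.eq_zero_iff_mem, mem_powSubOneIdeal_iff,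
      map_nsmul] at hn'
    rw [← hp, Ideal.Quotient.eq_zero_iff_mem, mem_powSubOneIdeal_iff]
    exact IsAddTorsionFree.nsmul_right_injective hn (by simpa using hn')

section setOne

variable [DecidableEq σ]

def setOne (i : σ) : MvPolynomial σ R →ₐ[R] MvPolynomial σ R :=
  aeval (Function.update X i 1)

@[simp]
lemma setOne_X_self (i : σ) : setOne i (X i : MvPolynomial σ R) = 1 := by
  simp [setOne]

@[simp]
lemma setOne_X_of_ne {i j : σ} (h : j ≠ i) : setOne i (X j : MvPolynomial σ R) = X j := by
  simp [setOne, h]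

lemma X_sub_one_dvd_sub_setOne (i : σ) (p : MvPolynomial σ R) : X i - 1 ∣ p - setOne i p := by
  induction p using MvPolynomial.induction_on with
  | C c => simp
  | add p q hp hq => simpa only [map_add, add_sub_add_comm] using dvd_add hp hq
  | mul_X p j hp =>
    have hXj : X i - 1 ∣ X j - setOne i (X j : MvPolynomial σ R) := by
      rcases eq_or_ne j i with rfl | h <;> simp [*]
    rw [map_mul, show p * X j - setOne i p * setOne i (X j)
      = (p - setOne i p) * X j + setOne i p * (X j - setOne i (X j)) by ring]
    exact dvd_add (dvd_mul_of_dvd_left hp _) (dvd_mul_of_dvd_right hXj _)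

lemma powSubOneIdeal_le_comap_setOne (a : σ → ℕ) (i : σ) :
    powSubOneIdeal (R := R) a ≤ (powSubOneIdeal a).comap (setOne i) := by
  refine Ideal.span_le.mpr ?_
  rintro _ ⟨j, rfl⟩
  rcases eq_or_ne j i with rfl | h
  · simp
  · simpa [h] using X_pow_sub_one_mem_powSubOneIdeal a j

variable {I : Ideal (MvPolynomial σ R)} (hI : ∀ i : σ, I ≤ I.comap (setOne i))

def setOneMod (i : σ) : MvPolynomial σ R ⧸ I →+* MvPolynomial σ R ⧸ I :=
  Ideal.quotientMap I (setOne i).toRingHom (hI i)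

def diffMod (i : σ) : MvPolynomial σ R ⧸ I →+ MvPolynomial σ R ⧸ I :=
  AddMonoidHom.id _ - (setOneMod hI i).toAddMonoidHom

lemma diffMod_apply (i : σ) (q : MvPolynomial σ R ⧸ I) :
    diffMod hI i q = q - setOneMod hI i q :=
  rfl

lemma setOneMod_mk_X (i j : σ) :
    setOneMod hI i (Ideal.Quotient.mk I (X j))
      = if j = i then 1 else Ideal.Quotient.mk I (X j) := by
  rcases eq_or_ne j i with rfl | h <;> simp [setOneMod, *]

lemma mk_X_sub_one_dvd_diffMod (i : σ) (q : MvPolynomial σ R ⧸ I) :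
    Ideal.Quotient.mk I (X i) - 1 ∣ diffMod hI i q := by
  obtain ⟨p, rfl⟩ := Ideal.Quotient.mk_surjective q
  simpa [diffMod_apply, setOneMod] using
    map_dvd (Ideal.Quotient.mk I) (X_sub_one_dvd_sub_setOne i p)

lemma diffMod_mul_of_setOneMod_eq_self {i : σ} {c : MvPolynomial σ R ⧸ I}
    (hc : setOneMod hI i c = c) (q : MvPolynomial σ R ⧸ I) :
    diffMod hI i (c * q) = c * diffMod hI i q := by
  rw [diffMod_apply, diffMod_apply, map_mul, hc, mul_sub]

lemma diffMod_mul_of_setOneMod_eq_zero {i : σ} {c : MvPolynomial σ R ⧸ I}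
    (hc : setOneMod hI i c = 0) (q : MvPolynomial σ R ⧸ I) : diffMod hI i (c * q) = c * q := by
  rw [diffMod_apply, map_mul, hc, zero_mul, sub_zero]

end setOne

section Fin3

lemma powSubOneIdeal_fin_three (a₁ a₂ a₃ : ℕ) : powSubOneIdeal ![a₁, a₂, a₃]
    = Ideal.span {(X 0 : MvPolynomial (Fin 3) R) ^ a₁ - 1, X 1 ^ a₂ - 1, X 2 ^ a₃ - 1} := by
  rw [powSubOneIdeal]
  congr 1
  ext p
  simp [Fin.exists_fin_succ, eq_comm]

def prodXSubOne (I : Ideal (MvPolynomial (Fin 3) R)) : MvPolynomial (Fin 3) R ⧸ I :=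
  (Ideal.Quotient.mk I (X 0) - 1) * (Ideal.Quotient.mk I (X 1) - 1) *
    (Ideal.Quotient.mk I (X 2) - 1)

variable {I : Ideal (MvPolynomial (Fin 3) R)} (hI : ∀ i : Fin 3, I ≤ I.comap (setOne i))

def projMod : MvPolynomial (Fin 3) R ⧸ I →+ MvPolynomial (Fin 3) R ⧸ I :=
  (diffMod hI 0).comp ((diffMod hI 1).comp (diffMod hI 2))

lemma projMod_mem_span (q : MvPolynomial (Fin 3) R ⧸ I) :
    projMod hI q ∈ Ideal.span {prodXSubOne I} := by
  have hfix : ∀ i j : Fin 3, j ≠ i →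
      setOneMod hI i (Ideal.Quotient.mk I (X j) - 1) = Ideal.Quotient.mk I (X j) - 1 := by
    intro i j h
    simp [setOneMod_mk_X, h]
  obtain ⟨q₂, h₂⟩ := mk_X_sub_one_dvd_diffMod hI 2 q
  obtain ⟨q₁, h₁⟩ := mk_X_sub_one_dvd_diffMod hI 1 q₂
  obtain ⟨q₀, h₀⟩ := mk_X_sub_one_dvd_diffMod hI 0 q₁
  refine Ideal.mem_span_singleton.mpr ⟨q₀, ?_⟩
  rw [projMod, AddMonoidHom.comp_apply, AddMonoidHom.comp_apply, h₂,
    diffMod_mul_of_setOneMod_eq_self hI (hfix 1 2 (by decide)), h₁, ← mul_assoc,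
    diffMod_mul_of_setOneMod_eq_self hI
      (by rw [map_mul, hfix 0 2 (by decide), hfix 0 1 (by decide)]),
    h₀, prodXSubOne]
  ring

lemma setOneMod_prodXSubOne (i : Fin 3) : setOneMod hI i (prodXSubOne I) = 0 := by
  fin_cases i <;> simp [prodXSubOne, setOneMod_mk_X]

lemma projMod_eq_self_of_mem {q : MvPolynomial (Fin 3) R ⧸ I}
    (hq : q ∈ Ideal.span {prodXSubOne I}) : projMod hI q = q := by
  obtain ⟨c, rfl⟩ := Ideal.mem_span_singleton.mp hq
  simp only [projMod, AddMonoidHom.comp_apply,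
    diffMod_mul_of_setOneMod_eq_zero hI (setOneMod_prodXSubOne hI _)]

theorem mem_span_prodXSubOne_of_zsmul_mem (hI : ∀ i : Fin 3, I ≤ I.comap (setOne i))
    [IsAddTorsionFree (MvPolynomial (Fin 3) R ⧸ I)] {m : ℤ} (hm : m ≠ 0)
    {q : MvPolynomial (Fin 3) R ⧸ I} (hq : m • q ∈ Ideal.span {prodXSubOne I}) :
    q ∈ Ideal.span {prodXSubOne I} := by
  have hproj : projMod hI q = q :=
    (zsmul_right_inj hm).mp (by rw [← map_zsmul, projMod_eq_self_of_mem hI hq])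
  exact hproj ▸ projMod_mem_span hI q

end Fin3

end MvPolynomial

end

theorem repRing_quotient_torsion_free_general (a₁ a₂ a₃ : ℕ)
    (g : repRing a₁ a₂ a₃) (m : ℤ) (hm : m ≠ 0)
    (h : (m : repRing a₁ a₂ a₃) * g ∈
      (Ideal.span {(Lcl a₁ a₂ a₃ 0 - 1) * (Lcl a₁ a₂ a₃ 1 - 1) * (Lcl a₁ a₂ a₃ 2 - 1)}
        : Ideal (repRing a₁ a₂ a₃))) :
    g ∈ (Ideal.span {(Lcl a₁ a₂ a₃ 0 - 1) * (Lcl a₁ a₂ a₃ 1 - 1) * (Lcl a₁ a₂ a₃ 2 - 1)}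
      : Ideal (repRing a₁ a₂ a₃)) := by
  have hI := powSubOneIdeal_fin_three (R := ℤ) a₁ a₂ a₃
  have hstable := hI ▸ powSubOneIdeal_le_comap_setOne (R := ℤ) ![a₁, a₂, a₃]
  have htors : IsAddTorsionFree (MvPolynomial (Fin 3) ℤ ⧸ powSubOneIdeal ![a₁, a₂, a₃]) :=
    inferInstance
  rw [hI] at htors
  exact mem_span_prodXSubOne_of_zsmul_mem hstable hm (by rwa [zsmul_eq_mul] : m • g ∈ _)

theorem repRing_quotient_torsion_free (a₁ a₂ a₃ : ℕ)
    (h₁ : 2 ≤ a₁) (h₂ : 2 ≤ a₂) (h₃ : 2 ≤ a₃)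
    (g : repRing a₁ a₂ a₃) (m : ℤ) (hm : m ≠ 0)
    (h : (m : repRing a₁ a₂ a₃) * g ∈
      (Ideal.span {(Lcl a₁ a₂ a₃ 0 - 1) * (Lcl a₁ a₂ a₃ 1 - 1) * (Lcl a₁ a₂ a₃ 2 - 1)}
        : Ideal (repRing a₁ a₂ a₃))) :
    g ∈ (Ideal.span {(Lcl a₁ a₂ a₃ 0 - 1) * (Lcl a₁ a₂ a₃ 1 - 1) * (Lcl a₁ a₂ a₃ 2 - 1)}
      : Ideal (repRing a₁ a₂ a₃)) :=
  repRing_quotient_torsion_free_general a₁ a₂ a₃ g m hm h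
end

section
/- Let N ≥ 2 and A = {(t₁,t₂) ∈ (ℂ*)² : t₁² = 1, t₁t₂^{N-1} = 1}. Then the representation ring ℤ[L₁,L₂]/(L₁²-1, L₁L₂^{N-1}-1) has the property that its ideal generated by (L₁-1) is a free ℤ-module of rank N-1 with basis {L₂^{i-1}(L₁-1) : 1 ≤ i ≤ N-1}. -/
open MvPolynomial

/-- The representation ring `ℤ[L₁,L₂]/(L₁²-1, L₁L₂^{N-1}-1)` of the diagonal symmetry
group of the Berglund–Hübsch dual of the `D_N` singularity. -/
def repRingDN (N : ℕ) : Type :=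
  MvPolynomial (Fin 2) ℤ ⧸
    Ideal.span {(X 0 : MvPolynomial (Fin 2) ℤ) ^ 2 - 1, X 0 * X 1 ^ (N - 1) - 1}

noncomputable instance (N : ℕ) : CommRing (repRingDN N) :=
  Ideal.Quotient.commRing _

/-- The class of `L_i` in `repRingDN N`. -/
noncomputable def LclDN (N : ℕ) (i : Fin 2) : repRingDN N :=
  Ideal.Quotient.mk _ (X i)

/-! Eliminating `L₁ = L₂^{N-1}` identifies the ring with `ℤ[X]/(gh)` for `g = X^{N-1} - 1` and
`h = X^{N-1} + 1`, with `L₂ ↦ X` and `L₁ - 1 ↦ g`. For `h` monic and `g` a non-zero-divisor,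
multiplication by `g` maps `R[X]/(h)` isomorphically onto the ideal `(g)` of `R[X]/(gh)`, so the
power basis `1, X, …, X^{deg h - 1}` of `R[X]/(h)` is carried to the basis `X^i g` of that ideal. -/

open Polynomial

namespace AdjoinRoot

variable {R A : Type*} [CommRing R] [CommRing A] [Algebra R A] {g h : R[X]}

-- `AdjoinRoot` carries no `R[X]`-module structure, so the map is built on the underlying quotients.
variable (g h) in
noncomputable def mulFactor : AdjoinRoot h →ₗ[R] AdjoinRoot (g * h) :=
  ((Submodule.mapQ (Ideal.span {h}) (Ideal.span {g * h}) (LinearMap.mulRight R[X] g)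
    (Submodule.span_singleton_le_iff_mem _ _ |>.mpr <| by
      simp [mul_comm])).restrictScalars R :
    R[X] ⧸ Ideal.span {h} →ₗ[R] R[X] ⧸ Ideal.span {g * h})

theorem mulFactor_mk (a : R[X]) : mulFactor g h (mk h a) = mk (g * h) (a * g) :=
  rfl

theorem mulFactor_injective (hg : IsLeftRegular g) : Function.Injective (mulFactor g h) := by
  refine (injective_iff_map_eq_zero _).mpr fun x hx => ?_
  induction x using AdjoinRoot.induction_on with
  | ih a =>
    rwa [mulFactor_mk, mk_eq_zero, mul_comm a, hg.dvd_cancel_left, ← mk_eq_zero] at hx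

theorem range_algEquiv_comp_mulFactor (e : AdjoinRoot (g * h) ≃ₐ[R] A) :
    LinearMap.range (e.toLinearMap ∘ₗ mulFactor g h) =
      (Ideal.span {e (mk (g * h) g)}).restrictScalars R := by
  ext x
  simp only [LinearMap.mem_range, LinearMap.coe_comp, Function.comp_apply,
    AlgEquiv.toLinearMap_apply, Submodule.restrictScalars_mem, Ideal.mem_span_singleton']
  constructor
  · rintro ⟨y, rfl⟩
    induction y using AdjoinRoot.induction_on with
    | ih a => exact ⟨e (mk _ a), by rw [mulFactor_mk, map_mul, map_mul]⟩
  · rintro ⟨a, rfl⟩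
    obtain ⟨c, rfl⟩ := (e.surjective.comp (mk_surjective (g := g * h))) a
    exact ⟨mk h c, by rw [mulFactor_mk, map_mul, map_mul, Function.comp_apply]⟩

theorem exists_basis_span_algEquiv_mk (hg : IsLeftRegular g) (hh : h.Monic)
    (e : AdjoinRoot (g * h) ≃ₐ[R] A) :
    ∃ b : Module.Basis (Fin h.natDegree) R ((Ideal.span {e (mk (g * h) g)}).restrictScalars R),
      ∀ i, (b i : A) = e (root (g * h)) ^ (i : ℕ) * e (mk (g * h) g) := by
  let B : Module.Basis (Fin h.natDegree) R (AdjoinRoot h) := (powerBasis' hh).basis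
  let T := e.toLinearMap ∘ₗ mulFactor g h
  have hT : Function.Injective T := e.injective.comp (mulFactor_injective hg)
  refine ⟨B.map ((LinearEquiv.ofInjective T hT).trans
    (LinearEquiv.ofEq _ _ (range_algEquiv_comp_mulFactor e))), fun i => ?_⟩
  have hB : B i = mk h (Polynomial.X ^ (i : ℕ)) := by
    rw [map_pow, mk_X]
    exact (powerBasis' hh).basis_eq_pow i
  rw [Module.Basis.map_apply, LinearEquiv.trans_apply, LinearEquiv.coe_ofEq_apply,
    LinearEquiv.ofInjective_apply, LinearMap.comp_apply, hB, AlgEquiv.toLinearMap_apply,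
    mulFactor_mk, map_mul, map_mul, map_pow, map_pow, mk_X]

end AdjoinRoot

theorem LclDN_zero_sq (N : ℕ) : LclDN N 0 ^ 2 = 1 := by
  rw [← sub_eq_zero]
  show Ideal.Quotient.mk _ (X 0 ^ 2 - 1 : MvPolynomial (Fin 2) ℤ) = 0
  exact Ideal.Quotient.eq_zero_iff_mem.mpr (Ideal.subset_span (by simp))

theorem LclDN_zero_mul_LclDN_one_pow (N : ℕ) : LclDN N 0 * LclDN N 1 ^ (N - 1) = 1 := by
  rw [← sub_eq_zero]
  show Ideal.Quotient.mk _ (X 0 * X 1 ^ (N - 1) - 1 : MvPolynomial (Fin 2) ℤ) = 0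
  exact Ideal.Quotient.eq_zero_iff_mem.mpr (Ideal.subset_span (by simp))

theorem LclDN_one_pow (N : ℕ) : LclDN N 1 ^ (N - 1) = LclDN N 0 := by
  linear_combination LclDN N 0 * LclDN_zero_mul_LclDN_one_pow N -
    LclDN N 1 ^ (N - 1) * LclDN_zero_sq N

noncomputable abbrev polyDN (N : ℕ) : Polynomial ℤ :=
  (Polynomial.X ^ (N - 1) - 1) * (Polynomial.X ^ (N - 1) + 1)

theorem root_polyDN_pow_sq (N : ℕ) : (AdjoinRoot.root (polyDN N) ^ (N - 1)) ^ 2 = 1 := by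
  have h : AdjoinRoot.mk (polyDN N)
      ((Polynomial.X ^ (N - 1) - 1) * (Polynomial.X ^ (N - 1) + 1)) = 0 :=
    AdjoinRoot.mk_self
  simp only [map_mul, map_sub, map_add, map_pow, map_one, AdjoinRoot.mk_X] at h
  linear_combination h

noncomputable def repRingDNToAdjoinRoot (N : ℕ) : repRingDN N →+* AdjoinRoot (polyDN N) :=
  Ideal.Quotient.lift _
    (MvPolynomial.aeval ![AdjoinRoot.root (polyDN N) ^ (N - 1), AdjoinRoot.root (polyDN N)] :
      MvPolynomial (Fin 2) ℤ →ₐ[ℤ] AdjoinRoot (polyDN N)).toRingHom <| by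
    intro a ha
    refine (Ideal.span_le (I := RingHom.ker _)).mpr ?_ ha
    rintro _ (rfl | rfl)
    · simp [root_polyDN_pow_sq]
    · simp [← pow_two, root_polyDN_pow_sq]

theorem repRingDNToAdjoinRoot_LclDN_zero (N : ℕ) :
    repRingDNToAdjoinRoot N (LclDN N 0) = AdjoinRoot.root _ ^ (N - 1) :=
  (Ideal.Quotient.lift_mk _ _ _).trans (by simp)

theorem repRingDNToAdjoinRoot_LclDN_one (N : ℕ) :
    repRingDNToAdjoinRoot N (LclDN N 1) = AdjoinRoot.root _ :=
  (Ideal.Quotient.lift_mk _ _ _).trans (by simp)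

noncomputable def adjoinRootToRepRingDN (N : ℕ) : AdjoinRoot (polyDN N) →+* repRingDN N :=
  AdjoinRoot.lift (algebraMap ℤ _) (LclDN N 1) <| by
    simp only [polyDN, Polynomial.eval₂_mul, Polynomial.eval₂_sub, Polynomial.eval₂_add,
      Polynomial.eval₂_X_pow, Polynomial.eval₂_one, LclDN_one_pow]
    linear_combination LclDN_zero_sq N

theorem adjoinRootToRepRingDN_root (N : ℕ) :
    adjoinRootToRepRingDN N (AdjoinRoot.root _) = LclDN N 1 :=
  AdjoinRoot.lift_root _

noncomputable def adjoinRootEquivRepRingDN (N : ℕ) : AdjoinRoot (polyDN N) ≃+* repRingDN N :=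
  RingEquiv.ofRingHom (adjoinRootToRepRingDN N) (repRingDNToAdjoinRoot N)
    (by
      apply Ideal.Quotient.ringHom_ext
      refine MvPolynomial.ringHom_ext' (RingHom.ext_int _ _) fun i => ?_
      fin_cases i
      · change adjoinRootToRepRingDN N (repRingDNToAdjoinRoot N (LclDN N 0)) = LclDN N 0
        rw [repRingDNToAdjoinRoot_LclDN_zero, map_pow, adjoinRootToRepRingDN_root, LclDN_one_pow]
      · change adjoinRootToRepRingDN N (repRingDNToAdjoinRoot N (LclDN N 1)) = LclDN N 1
        rw [repRingDNToAdjoinRoot_LclDN_one, adjoinRootToRepRingDN_root])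
    (by
      apply Ideal.Quotient.ringHom_ext
      refine Polynomial.ringHom_ext' (RingHom.ext_int _ _) ?_
      change repRingDNToAdjoinRoot N (adjoinRootToRepRingDN N (AdjoinRoot.root _)) = AdjoinRoot.root _
      rw [adjoinRootToRepRingDN_root, repRingDNToAdjoinRoot_LclDN_one])

theorem DN_ideal_basis (N : ℕ) (hN : 2 ≤ N) :
    ∃ b : Module.Basis (Fin (N - 1)) ℤ
        ((Ideal.span {LclDN N 0 - 1} : Ideal (repRingDN N)).restrictScalars ℤ),
      ∀ i : Fin (N - 1), (b i : repRingDN N) = LclDN N 1 ^ (i : ℕ) * (LclDN N 0 - 1) := by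
  have hN' : N - 1 ≠ 0 := by omega
  have hg : IsLeftRegular (Polynomial.X ^ (N - 1) - 1 : Polynomial ℤ) := by
    simpa using (Polynomial.monic_X_pow_sub_C (1 : ℤ) hN').isRegular.left
  let e : AdjoinRoot ((Polynomial.X ^ (N - 1) - 1) * (Polynomial.X ^ (N - 1) + 1) : Polynomial ℤ)
      ≃ₐ[ℤ] repRingDN N := (adjoinRootEquivRepRingDN N).toIntAlgEquiv
  have he_root : e (AdjoinRoot.root _) = LclDN N 1 := adjoinRootToRepRingDN_root N
  have he_gen : e (AdjoinRoot.mk _ (Polynomial.X ^ (N - 1) - 1)) = LclDN N 0 - 1 := by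
    simp only [map_sub, map_pow, AdjoinRoot.mk_X, map_one, he_root, LclDN_one_pow]
  have hh : (Polynomial.X ^ (N - 1) + 1 : Polynomial ℤ).Monic := by
    simpa using Polynomial.monic_X_pow_add_C (1 : ℤ) hN'
  have hdeg : (Polynomial.X ^ (N - 1) + 1 : Polynomial ℤ).natDegree = N - 1 := by
    simpa using Polynomial.natDegree_X_pow_add_C (n := N - 1) (r := (1 : ℤ))
  have := AdjoinRoot.exists_basis_span_algEquiv_mk hg hh e
  rwa [he_gen, he_root, hdeg] at this
end
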